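/- Let m : ℝ → ℝ be smooth with m(0) = 0 and let b₀, c₀, b₁, c₁, α, β ∈ ℝ satisfy b₁β + c₁α = 1 and β(β − b₀) = α(α + c₀). Define b(y) = b₀ + b₁·m′(y) and c(y) = c₀ + c₁·m′(y). Then for every smooth function u : ℝ² → ℝ (not necessarily a solution), the identity exp(αx + βt)·F[u] = ∂ₜ[ exp(αx + βt)·(∂ₜu − β·u + B(u)) ] + ∂ₓ[ exp(αx + βt)·(α·u − ∂ₓu + C(u)) ] holds on ℝ². In particular, exp(αx + βt) is a conservation law multiplier, and on every solution of F[u] = 0 the displayed current is divergence-free. -/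

import Mathlib

noncomputable section

open Real

/-- Partial derivative in the first (time) variable. -/
def Dt (u : ℝ → ℝ → ℝ) : ℝ → ℝ → ℝ := fun t x => deriv (fun s => u s x) t

/-- Partial derivative in the second (space) variable. -/
def Dx (u : ℝ → ℝ → ℝ) : ℝ → ℝ → ℝ := fun t x => deriv (fun s => u t s) x

/-- Smoothness (C^∞) of a function of two real variables. -/
def Smooth2 (u : ℝ → ℝ → ℝ) : Prop := ContDiff ℝ (⊤ : ℕ∞) (fun p : ℝ × ℝ => u p.1 p.2)
/-- The semilinear wave operator F[u] = ∂ₜ²u − ∂ₓ²u + b(u)∂ₜu + c(u)∂ₓu + m(u). -/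
def Fop (b c m : ℝ → ℝ) (u : ℝ → ℝ → ℝ) : ℝ → ℝ → ℝ := fun t x =>
  Dt (Dt u) t x - Dx (Dx u) t x + b (u t x) * Dt u t x + c (u t x) * Dx u t x + m (u t x)

/-- The adjoint linearized operator along u:
L*[u]q = ∂ₜ²q − ∂ₓ²q − b(u)∂ₜq − c(u)∂ₓq + m′(u)q. -/
def Lstar (b c m : ℝ → ℝ) (u q : ℝ → ℝ → ℝ) : ℝ → ℝ → ℝ := fun t x =>
  Dt (Dt q) t x - Dx (Dx q) t x - b (u t x) * Dt q t x - c (u t x) * Dx q t x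
    + deriv m (u t x) * q t x

/-!
With `B y = b₀ y + b₁ m y` and `C y = c₀ y + c₁ m y`, the product rule shows that the divergence of
the current `exp(αx + βt)·(∂ₜu − βu + B(u), αu − ∂ₓu + C(u))` is `exp(αx + βt)` times the wave
operator with the zeroth-order term `m` replaced by `βB(y) + αC(y) − (β² − α²)y`. The two
relations between the constants say exactly that this replacement is `m` itself.
-/

section PartialDerivatives

variable {u : ℝ → ℝ → ℝ}

theorem hasDerivAt_fderiv_apply_left (hu : Differentiable ℝ (fun p : ℝ × ℝ => u p.1 p.2))
    (t x : ℝ) :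
    HasDerivAt (fun s => u s x) (fderiv ℝ (fun p : ℝ × ℝ => u p.1 p.2) (t, x) (1, 0)) t := by
  have hpath : HasDerivAt (fun s : ℝ => (s, x)) ((1 : ℝ), (0 : ℝ)) t :=
    (hasDerivAt_id t).prodMk (hasDerivAt_const t x)
  simpa [Function.comp_def] using (hu (t, x)).hasFDerivAt.comp_hasDerivAt t hpath

theorem hasDerivAt_fderiv_apply_right (hu : Differentiable ℝ (fun p : ℝ × ℝ => u p.1 p.2))
    (t x : ℝ) :
    HasDerivAt (fun s => u t s) (fderiv ℝ (fun p : ℝ × ℝ => u p.1 p.2) (t, x) (0, 1)) x := by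
  have hpath : HasDerivAt (fun s : ℝ => (t, s)) ((0 : ℝ), (1 : ℝ)) x :=
    (hasDerivAt_const x t).prodMk (hasDerivAt_id x)
  simpa [Function.comp_def] using (hu (t, x)).hasFDerivAt.comp_hasDerivAt x hpath

theorem Dt_eq_fderiv (hu : Differentiable ℝ (fun p : ℝ × ℝ => u p.1 p.2)) :
    Dt u = fun t x => fderiv ℝ (fun p : ℝ × ℝ => u p.1 p.2) (t, x) (1, 0) :=
  funext₂ fun t x => (hasDerivAt_fderiv_apply_left hu t x).deriv

theorem Dx_eq_fderiv (hu : Differentiable ℝ (fun p : ℝ × ℝ => u p.1 p.2)) :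
    Dx u = fun t x => fderiv ℝ (fun p : ℝ × ℝ => u p.1 p.2) (t, x) (0, 1) :=
  funext₂ fun t x => (hasDerivAt_fderiv_apply_right hu t x).deriv

theorem hasDerivAt_Dt (hu : Differentiable ℝ (fun p : ℝ × ℝ => u p.1 p.2)) (t x : ℝ) :
    HasDerivAt (fun s => u s x) (Dt u t x) t := by
  rw [Dt_eq_fderiv hu]
  exact hasDerivAt_fderiv_apply_left hu t x

theorem hasDerivAt_Dx (hu : Differentiable ℝ (fun p : ℝ × ℝ => u p.1 p.2)) (t x : ℝ) :
    HasDerivAt (fun s => u t s) (Dx u t x) x := by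
  rw [Dx_eq_fderiv hu]
  exact hasDerivAt_fderiv_apply_right hu t x

theorem Smooth2.differentiable (hu : Smooth2 u) :
    Differentiable ℝ (fun p : ℝ × ℝ => u p.1 p.2) :=
  ContDiff.differentiable hu (by simp)

theorem Smooth2.Dt (hu : Smooth2 u) : Smooth2 (Dt u) := by
  rw [Smooth2, Dt_eq_fderiv hu.differentiable]
  exact (ContDiff.fderiv_right hu (by simp)).clm_apply contDiff_const

theorem Smooth2.Dx (hu : Smooth2 u) : Smooth2 (Dx u) := by
  rw [Smooth2, Dx_eq_fderiv hu.differentiable]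
  exact (ContDiff.fderiv_right hu (by simp)).clm_apply contDiff_const

end PartialDerivatives

theorem intervalIntegral_const_add_mul_deriv {f : ℝ → ℝ} (hf : ContDiff ℝ 1 f)
    (k₀ k₁ y : ℝ) :
    ∫ s in (0 : ℝ)..y, (k₀ + k₁ * deriv f s) = k₀ * y + k₁ * (f y - f 0) := by
  have hf' : Continuous (deriv f) := hf.continuous_deriv le_rfl
  rw [intervalIntegral.integral_add intervalIntegrable_const
      ((hf'.intervalIntegrable _ _).const_mul k₁),
    intervalIntegral.integral_const_mul,
    intervalIntegral.integral_deriv_eq_sub (fun s _ => hf.differentiable one_ne_zero s)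
      (hf'.intervalIntegrable _ _)]
  simp [mul_comm]

theorem hasDerivAt_const_mul_add_const_mul {f : ℝ → ℝ} (hf : Differentiable ℝ f)
    (k₀ k₁ y : ℝ) :
    HasDerivAt (fun y => k₀ * y + k₁ * f y) (k₀ + k₁ * deriv f y) y :=
  (((hasDerivAt_id' y).const_mul k₀).add ((hf y).hasDerivAt.const_mul k₁)).congr_deriv
    (by ring)

theorem exp_mul_Fop_eq_divergence (α β : ℝ) {b c B C : ℝ → ℝ}
    (hB : ∀ y, HasDerivAt B (b y) y) (hC : ∀ y, HasDerivAt C (c y) y)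
    {u : ℝ → ℝ → ℝ} (hu : Smooth2 u) (t x : ℝ) :
    Real.exp (α * x + β * t) *
        Fop b c (fun y => β * B y + α * C y - (β ^ 2 - α ^ 2) * y) u t x =
      Dt (fun t x => Real.exp (α * x + β * t) * (Dt u t x - β * u t x + B (u t x))) t x
      + Dx (fun t x => Real.exp (α * x + β * t) * (α * u t x - Dx u t x + C (u t x))) t x := by
  have hut := hasDerivAt_Dt hu.differentiable t x
  have hux := hasDerivAt_Dx hu.differentiable t x
  have hutt := hasDerivAt_Dt hu.Dt.differentiable t x
  have huxx := hasDerivAt_Dx hu.Dx.differentiable t x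
  have hexpt : HasDerivAt (fun s => Real.exp (α * x + β * s))
      (Real.exp (α * x + β * t) * β) t := by
    simpa using (((hasDerivAt_id t).const_mul β).const_add (α * x)).exp
  have hexpx : HasDerivAt (fun s => Real.exp (α * s + β * t))
      (Real.exp (α * x + β * t) * α) x := by
    simpa using (((hasDerivAt_id x).const_mul α).add_const (β * t)).exp
  have hcurrent_t : HasDerivAt
      (fun s => Real.exp (α * x + β * s) * (Dt u s x - β * u s x + B (u s x)))
      (Real.exp (α * x + β * t) * β * (Dt u t x - β * u t x + B (u t x))
        + Real.exp (α * x + β * t) * (Dt (Dt u) t x - β * Dt u t x + b (u t x) * Dt u t x)) t :=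
    hexpt.mul ((hutt.sub (hut.const_mul β)).add ((hB (u t x)).comp t hut))
  have hcurrent_x : HasDerivAt
      (fun s => Real.exp (α * s + β * t) * (α * u t s - Dx u t s + C (u t s)))
      (Real.exp (α * x + β * t) * α * (α * u t x - Dx u t x + C (u t x))
        + Real.exp (α * x + β * t) * (α * Dx u t x - Dx (Dx u) t x + c (u t x) * Dx u t x)) x :=
    hexpx.mul (((hux.const_mul α).sub huxx).add ((hC (u t x)).comp x hux))
  simp only [Dt, Dx] at hcurrent_t hcurrent_x ⊢
  rw [hcurrent_t.deriv, hcurrent_x.deriv, Fop]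
  simp only [Dt, Dx]
  ring

/-- exp(αx + βt) is a conservation law multiplier of the semilinear wave
equation with b = b₀ + b₁m′, c = c₀ + c₁m′, b₁β + c₁α = 1,
β(β − b₀) = α(α + c₀). -/
theorem stmt_7
    (m : ℝ → ℝ) (hm : ContDiff ℝ (⊤ : ℕ∞) m) (hm0 : m 0 = 0)
    (b₀ c₀ b₁ c₁ α β : ℝ)
    (h1 : b₁ * β + c₁ * α = 1) (h2 : β * (β - b₀) = α * (α + c₀))
    (b c : ℝ → ℝ)
    (hbdef : ∀ y, b y = b₀ + b₁ * deriv m y)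
    (hcdef : ∀ y, c y = c₀ + c₁ * deriv m y)
    (B C : ℝ → ℝ)
    (hB : ∀ y, B y = ∫ s in (0:ℝ)..y, b s)
    (hC : ∀ y, C y = ∫ s in (0:ℝ)..y, c s)
    (u : ℝ → ℝ → ℝ) (hu : Smooth2 u) :
    (∀ t x : ℝ,
      Real.exp (α * x + β * t) * Fop b c m u t x =
        Dt (fun t x => Real.exp (α * x + β * t) * (Dt u t x - β * u t x + B (u t x))) t x
        + Dx (fun t x => Real.exp (α * x + β * t) * (α * u t x - Dx u t x + C (u t x))) t x)
    ∧ ((∀ t x, Fop b c m u t x = 0) →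
      ∀ t x : ℝ,
        Dt (fun t x => Real.exp (α * x + β * t) * (Dt u t x - β * u t x + B (u t x))) t x
        + Dx (fun t x => Real.exp (α * x + β * t) * (α * u t x - Dx u t x + C (u t x))) t x
          = 0) := by
  have hm1 : ContDiff ℝ 1 m := hm.of_le (by simp)
  have hBeq : B = fun y => b₀ * y + b₁ * m y := funext fun y => by
    simp only [hB, hbdef, intervalIntegral_const_add_mul_deriv hm1, hm0, sub_zero]
  have hCeq : C = fun y => c₀ * y + c₁ * m y := funext fun y => by
    simp only [hC, hcdef, intervalIntegral_const_add_mul_deriv hm1, hm0, sub_zero]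
  have hmd : Differentiable ℝ m := hm1.differentiable one_ne_zero
  have hBd : ∀ y, HasDerivAt B (b y) y := fun y => by
    simpa only [hBeq, hbdef] using hasDerivAt_const_mul_add_const_mul hmd b₀ b₁ y
  have hCd : ∀ y, HasDerivAt C (c y) y := fun y => by
    simpa only [hCeq, hcdef] using hasDerivAt_const_mul_add_const_mul hmd c₀ c₁ y
  have hmass : (fun y => β * B y + α * C y - (β ^ 2 - α ^ 2) * y) = m := funext fun y => by
    simp only [hBeq, hCeq]
    linear_combination m y * h1 - y * h2
  have hdiv := exp_mul_Fop_eq_divergence α β hBd hCd hu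
  rw [hmass] at hdiv
  refine ⟨hdiv, fun hsol t x => ?_⟩
  rw [← hdiv, hsol, mul_zero]
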